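/- arXiv:1902.05643 — 3 statements merged into one kernel-verified Lean document; each statement's English description precedes it below -/
import Mathlib

section
/- Consistency of the shear-rate projection splitting: Let d ≥ 1, let Ω ⊆ ℝ^d be open, and let ρ > 0, Δt > 0 be real constants. Suppose ũ, u, uⁿ, uⁿ⁻¹ : ℝ^d → ℝ^d are twice continuously differentiable vector fields, a, b : ℝ^d → ℝ are continuously differentiable scalar fields, p, φ, ψ : ℝ^d → ℝ are continuously differentiable scalar fields, and f : ℝ^d → ℝ^d is any function, such that at every point of Ω: (i) ρ(3ũ − 4uⁿ + uⁿ⁻¹)/(2Δt) + ρ(ũ·∇)ũ − ∇·(2b D(ũ)) + ∇p = f (the prediction equation); (ii) u = ũ − (2Δt/(3ρ))∇φ (the velocity correction); (iii) ∇ψ = ∇·(2a D(u)) − ∇·(2b D(ũ)) (the shear-rate correction equation). Then the updated pressure q := p + φ + ψ satisfies, at every point of Ω, the full momentum equation ρ(3u − 4uⁿ + uⁿ⁻¹)/(2Δt) + ρ(ũ·∇)ũ − ∇·(2a D(u)) + ∇q = f. -/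
/-- Partial derivative `∂_j g` of a scalar field on `ℝ^d`. -/
noncomputable def pdiff {d : ℕ} (j : Fin d) (g : (Fin d → ℝ) → ℝ) (x : Fin d → ℝ) : ℝ :=
  fderiv ℝ g x (Pi.single j 1)

/-- Shear-rate tensor `D(v)_{ij} = (∂_j v_i + ∂_i v_j)/2` of a vector field. -/
noncomputable def shearD {d : ℕ} (v : (Fin d → ℝ) → (Fin d → ℝ)) (i j : Fin d)
    (x : Fin d → ℝ) : ℝ :=
  (pdiff j (fun y => v y i) x + pdiff i (fun y => v y j) x) / 2

/-!
The velocity correction lowers the BDF2 difference quotient `ρ (3u - 4uⁿ + uⁿ⁻¹) / (2Δt)` by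
exactly `∇φ`, and the shear-rate correction `∇ψ` trades the viscous term with viscosity `b` at
`ũ` for the one with viscosity `a` at `u`. Since `∇q = ∇p + ∇φ + ∇ψ`, adding these two
identities to the prediction equation gives the momentum equation pointwise.
-/

theorem pdiff_add {d : ℕ} {g h : (Fin d → ℝ) → ℝ} {x : Fin d → ℝ}
    (hg : DifferentiableAt ℝ g x) (hh : DifferentiableAt ℝ h x) (j : Fin d) :
    pdiff j (fun y => g y + h y) x = pdiff j g x + pdiff j h x := by
  simp only [pdiff, fderiv_fun_add hg hh, add_apply]

theorem bdf2_sub_projection {ρ dt : ℝ} (hρ : ρ ≠ 0) (hdt : dt ≠ 0) (w v v' g : ℝ) :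
    ρ * (3 * (w - 2 * dt / (3 * ρ) * g) - 4 * v + v') / (2 * dt)
      = ρ * (3 * w - 4 * v + v') / (2 * dt) - g := by
  field_simp
  ring

theorem shear_rate_projection_consistency_general
    (d : ℕ) (Ω : Set (Fin d → ℝ))
    (ρ dt : ℝ) (hρ : 0 < ρ) (hdt : 0 < dt)
    (ut u un un1 : (Fin d → ℝ) → (Fin d → ℝ))
    (a b : (Fin d → ℝ) → ℝ)
    (p φ ψ : (Fin d → ℝ) → ℝ)
    (f : (Fin d → ℝ) → (Fin d → ℝ))
    (hp : ContDiff ℝ 1 p) (hφ : ContDiff ℝ 1 φ) (hψ : ContDiff ℝ 1 ψ)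
    -- (i) prediction equation
    (hpred : ∀ x ∈ Ω, ∀ i,
      ρ * (3 * ut x i - 4 * un x i + un1 x i) / (2 * dt)
        + ρ * (∑ j, ut x j * pdiff j (fun y => ut y i) x)
        - (∑ j, pdiff j (fun y => 2 * b y * shearD ut i j y) x)
        + pdiff i p x = f x i)
    -- (ii) velocity correction
    (hcorr : ∀ x ∈ Ω, ∀ i,
      u x i = ut x i - (2 * dt / (3 * ρ)) * pdiff i φ x)
    -- (iii) shear-rate correction equation
    (hpsi : ∀ x ∈ Ω, ∀ i,
      pdiff i ψ x = (∑ j, pdiff j (fun y => 2 * a y * shearD u i j y) x)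
        - (∑ j, pdiff j (fun y => 2 * b y * shearD ut i j y) x)) :
    -- conclusion: full momentum equation for q = p + φ + ψ
    ∀ x ∈ Ω, ∀ i,
      ρ * (3 * u x i - 4 * un x i + un1 x i) / (2 * dt)
        + ρ * (∑ j, ut x j * pdiff j (fun y => ut y i) x)
        - (∑ j, pdiff j (fun y => 2 * a y * shearD u i j y) x)
        + pdiff i (fun y => p y + φ y + ψ y) x = f x i := by
  intro x hx i
  have hp' := (hp.differentiable one_ne_zero).differentiableAt (x := x)
  have hφ' := (hφ.differentiable one_ne_zero).differentiableAt (x := x)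
  have hψ' := (hψ.differentiable one_ne_zero).differentiableAt (x := x)
  rw [pdiff_add (g := fun y => p y + φ y) (hp'.add hφ') hψ', pdiff_add hp' hφ', hcorr x hx i,
    bdf2_sub_projection hρ.ne' hdt.ne', hpsi x hx i]
  linarith [hpred x hx i]

/-- Consistency of the shear-rate projection splitting: combining the prediction
equation, the velocity correction and the shear-rate correction equation, the updated
pressure `q = p + φ + ψ` satisfies the full momentum equation on `Ω`. -/
theorem shear_rate_projection_consistency
    (d : ℕ) (hd : 1 ≤ d) (Ω : Set (Fin d → ℝ)) (hΩ : IsOpen Ω)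
    (ρ dt : ℝ) (hρ : 0 < ρ) (hdt : 0 < dt)
    (ut u un un1 : (Fin d → ℝ) → (Fin d → ℝ))
    (a b : (Fin d → ℝ) → ℝ)
    (p φ ψ : (Fin d → ℝ) → ℝ)
    (f : (Fin d → ℝ) → (Fin d → ℝ))
    (hut : ContDiff ℝ 2 ut) (hu : ContDiff ℝ 2 u)
    (hun : ContDiff ℝ 2 un) (hun1 : ContDiff ℝ 2 un1)
    (ha : ContDiff ℝ 1 a) (hb : ContDiff ℝ 1 b)
    (hp : ContDiff ℝ 1 p) (hφ : ContDiff ℝ 1 φ) (hψ : ContDiff ℝ 1 ψ)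
    -- (i) prediction equation
    (hpred : ∀ x ∈ Ω, ∀ i,
      ρ * (3 * ut x i - 4 * un x i + un1 x i) / (2 * dt)
        + ρ * (∑ j, ut x j * pdiff j (fun y => ut y i) x)
        - (∑ j, pdiff j (fun y => 2 * b y * shearD ut i j y) x)
        + pdiff i p x = f x i)
    -- (ii) velocity correction
    (hcorr : ∀ x ∈ Ω, ∀ i,
      u x i = ut x i - (2 * dt / (3 * ρ)) * pdiff i φ x)
    -- (iii) shear-rate correction equation
    (hpsi : ∀ x ∈ Ω, ∀ i,
      pdiff i ψ x = (∑ j, pdiff j (fun y => 2 * a y * shearD u i j y) x)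
        - (∑ j, pdiff j (fun y => 2 * b y * shearD ut i j y) x)) :
    -- conclusion: full momentum equation for q = p + φ + ψ
    ∀ x ∈ Ω, ∀ i,
      ρ * (3 * u x i - 4 * un x i + un1 x i) / (2 * dt)
        + ρ * (∑ j, ut x j * pdiff j (fun y => ut y i) x)
        - (∑ j, pdiff j (fun y => 2 * a y * shearD u i j y) x)
        + pdiff i (fun y => p y + φ y + ψ y) x = f x i :=
  shear_rate_projection_consistency_general d Ω ρ dt hρ hdt ut u un un1 a b p φ ψ f hp hφ hψ hpred
    hcorr hpsi
end

section
/- Monotonicity of radially scaled vector fields: Let E be a real inner product space and let g : ℝ → ℝ be a function such that g(t) ≥ 0 for all t ≥ 0 and the map t ↦ t·g(t) is monotone nondecreasing on [0, ∞). Then for all F, G ∈ E: ⟨g(‖F‖)·F − g(‖G‖)·G, F − G⟩ ≥ 0. -/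
open RealInnerProductSpace

/-- Monotonicity of radially scaled vector fields: if `g ≥ 0` on `[0,∞)` and
`t ↦ t·g(t)` is monotone nondecreasing on `[0,∞)`, then
`⟨g(‖F‖)·F − g(‖G‖)·G, F − G⟩ ≥ 0` for all `F, G` in a real inner product space. -/
theorem radially_scaled_monotone
    {E : Type*} [NormedAddCommGroup E] [InnerProductSpace ℝ E]
    (g : ℝ → ℝ) (hg : ∀ t : ℝ, 0 ≤ t → 0 ≤ g t)
    (hmono : MonotoneOn (fun t => t * g t) (Set.Ici (0 : ℝ))) :
    ∀ F G : E, 0 ≤ ⟪g ‖F‖ • F - g ‖G‖ • G, F - G⟫ := by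
  intro F G
  set a := ‖F‖ with ha
  set b := ‖G‖ with hb
  have ha0 : (0:ℝ) ≤ a := norm_nonneg F
  have hb0 : (0:ℝ) ≤ b := norm_nonneg G
  have hga : 0 ≤ g a := hg a ha0
  have hgb : 0 ≤ g b := hg b hb0
  have hFG : ⟪F, G⟫ ≤ a * b := real_inner_le_norm F G
  have hexp : ⟪g a • F - g b • G, F - G⟫
      = g a * (a*a) + g b * (b*b) - (g a + g b) * ⟪F, G⟫ := by
    simp [inner_sub_sub_self, inner_sub_left, inner_sub_right, real_inner_smul_left,
      real_inner_smul_right, real_inner_self_eq_norm_mul_norm, real_inner_comm G F, ← ha, ← hb]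
    ring
  have key : (a * g a - b * g b) * (a - b) ≥ 0 := by
    rcases le_total a b with h | h
    · have := hmono (Set.mem_Ici.2 ha0) (Set.mem_Ici.2 hb0) h
      have h1 : a * g a - b * g b ≤ 0 := by simpa using sub_nonpos.2 this
      nlinarith
    · have := hmono (Set.mem_Ici.2 hb0) (Set.mem_Ici.2 ha0) h
      have h1 : 0 ≤ a * g a - b * g b := by simpa using sub_nonneg.2 this
      nlinarith
  rw [hexp]
  nlinarith [mul_nonneg (add_nonneg hga hgb) (sub_nonneg.2 hFG)]
end

section
/- The Carreau–Yasuda law satisfies the monotonicity hypothesis: Let m ≥ 0, C0 > 0, λ ∈ ℝ, and 0 ≤ ν∞ ≤ ν0. Define, on the space of d×d real matrices equipped with the Frobenius inner product, ν(F) = ν∞ + (ν0 − ν∞)(C0 + λ² ‖F‖²)^{(m−1)/2}, where ‖F‖ is the Frobenius norm. Then for all d×d real matrices F and G: (ν(F)·F − ν(G)·G) : (F − G) ≥ 0, where A : B = Σ_{ij} A_{ij} B_{ij}. -/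
/-- Frobenius norm of a `d × d` real matrix. -/
noncomputable def frobNorm {d : ℕ} (F : Matrix (Fin d) (Fin d) ℝ) : ℝ :=
  Real.sqrt (∑ i, ∑ j, F i j ^ 2)


lemma cy_key (m C0 lam : ℝ) (hm : 0 ≤ m) (hC0 : 0 < C0) {s t : ℝ}
    (hs : 0 ≤ s) (hst : s ≤ t) :
    s * (C0 + lam ^ 2 * s ^ 2) ^ ((m - 1) / 2) ≤ t * (C0 + lam ^ 2 * t ^ 2) ^ ((m - 1) / 2) := by
  have ht : 0 ≤ t := hs.trans hst
  have hsq : s ^ 2 ≤ t ^ 2 := by nlinarith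
  have hB : (0:ℝ) < C0 + lam ^ 2 * s ^ 2 := by positivity
  have hA : (0:ℝ) < C0 + lam ^ 2 * t ^ 2 := by positivity
  have hBA : C0 + lam ^ 2 * s ^ 2 ≤ C0 + lam ^ 2 * t ^ 2 := by nlinarith [sq_nonneg lam]
  rcases le_or_gt 1 m with h1 | h1
  · exact mul_le_mul hst (Real.rpow_le_rpow hB.le hBA (by linarith)) (Real.rpow_nonneg hB.le _) ht
  · set e : ℝ := (1 - m) / 2 with he_def
    have he : 0 ≤ e := by rw [he_def]; linarith
    have hexp : (m - 1) / 2 = -e := by rw [he_def]; ring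
    rw [hexp, Real.rpow_neg hB.le, Real.rpow_neg hA.le]
    rcases eq_or_lt_of_le hs with hs0 | hs0
    · rw [← hs0, zero_mul]
      exact mul_nonneg ht (inv_nonneg.2 (Real.rpow_nonneg hA.le e))
    · have ht0 : 0 < t := lt_of_lt_of_le hs0 hst
      rw [← div_eq_mul_inv, ← div_eq_mul_inv,
        div_le_div_iff₀ (Real.rpow_pos_of_pos hB e) (Real.rpow_pos_of_pos hA e)]
      -- goal : s * (A)^e ≤ t * (B)^e
      have key : s ^ 2 * (C0 + lam ^ 2 * t ^ 2) ≤ t ^ 2 * (C0 + lam ^ 2 * s ^ 2) := by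
        nlinarith [sq_nonneg lam, sq_nonneg (s*t)]
      have hL : s * (C0 + lam ^ 2 * t ^ 2) ^ e
          = s ^ (m:ℝ) * (s ^ 2 * (C0 + lam ^ 2 * t ^ 2)) ^ e := by
        rw [Real.mul_rpow (sq_nonneg s) hA.le, ← Real.rpow_natCast s 2, ← Real.rpow_mul hs,
          ← mul_assoc, ← Real.rpow_add hs0]
        norm_num
        rw [show m + 2 * e = 1 by rw [he_def]; ring, Real.rpow_one]
        exact Or.inl rfl
      have hR : t * (C0 + lam ^ 2 * s ^ 2) ^ e
          = t ^ (m:ℝ) * (t ^ 2 * (C0 + lam ^ 2 * s ^ 2)) ^ e := by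
        rw [Real.mul_rpow (sq_nonneg t) hB.le, ← Real.rpow_natCast t 2, ← Real.rpow_mul ht,
          ← mul_assoc, ← Real.rpow_add ht0]
        norm_num
        rw [show m + 2 * e = 1 by rw [he_def]; ring, Real.rpow_one]
        exact Or.inl rfl
      rw [hL, hR]
      exact mul_le_mul (Real.rpow_le_rpow hs hst hm)
        (Real.rpow_le_rpow (by positivity) key he) (Real.rpow_nonneg (by positivity) e)
        (Real.rpow_nonneg ht m)

lemma cy_nu_mono (m C0 lam νinf ν0 : ℝ) (hm : 0 ≤ m) (hC0 : 0 < C0)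
    (hνinf : 0 ≤ νinf) (hν : νinf ≤ ν0) {s t : ℝ} (hs : 0 ≤ s) (hst : s ≤ t) :
    (νinf + (ν0 - νinf) * (C0 + lam ^ 2 * s ^ 2) ^ ((m - 1) / 2)) * s
      ≤ (νinf + (ν0 - νinf) * (C0 + lam ^ 2 * t ^ 2) ^ ((m - 1) / 2)) * t := by
  have hk := cy_key m C0 lam hm hC0 hs hst
  nlinarith [mul_le_mul_of_nonneg_left hk (sub_nonneg.2 hν),
    mul_le_mul_of_nonneg_left hst hνinf]

/-- The Carreau–Yasuda law satisfies the monotonicity hypothesis: with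
`ν(F) = ν∞ + (ν0 − ν∞)(C0 + λ² ‖F‖²)^{(m−1)/2}` (Frobenius norm), one has
`(ν(F)·F − ν(G)·G) : (F − G) ≥ 0` for all `d × d` real matrices `F, G`. -/
theorem carreau_yasuda_matrix_monotone
    (d : ℕ) (m C0 lam νinf ν0 : ℝ)
    (hm : 0 ≤ m) (hC0 : 0 < C0) (hνinf : 0 ≤ νinf) (hν : νinf ≤ ν0)
    (ν : Matrix (Fin d) (Fin d) ℝ → ℝ)
    (hνdef : ∀ F, ν F = νinf + (ν0 - νinf) * (C0 + lam ^ 2 * frobNorm F ^ 2) ^ ((m - 1) / 2)) :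
    ∀ F G : Matrix (Fin d) (Fin d) ℝ,
      0 ≤ ∑ i, ∑ j, (ν F * F i j - ν G * G i j) * (F i j - G i j) := by
  intro F G
  set a := frobNorm F with ha
  set b := frobNorm G with hb
  have hSF : (0:ℝ) ≤ ∑ i, ∑ j, F i j ^ 2 := by positivity
  have hSG : (0:ℝ) ≤ ∑ i, ∑ j, G i j ^ 2 := by positivity
  have ha0 : 0 ≤ a := Real.sqrt_nonneg _
  have hb0 : 0 ≤ b := Real.sqrt_nonneg _
  have haF : a ^ 2 = ∑ i, ∑ j, F i j ^ 2 := Real.sq_sqrt hSF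
  have hbG : b ^ 2 = ∑ i, ∑ j, G i j ^ 2 := Real.sq_sqrt hSG
  -- Cauchy–Schwarz
  have hCS : (∑ i, ∑ j, F i j * G i j) ≤ a * b := by
    have h1 : (∑ i, ∑ j, F i j * G i j)
        = ∑ p : Fin d × Fin d, F p.1 p.2 * G p.1 p.2 :=
      (Fintype.sum_prod_type (fun p : Fin d × Fin d => F p.1 p.2 * G p.1 p.2)).symm
    have h2 : a ^ 2 = ∑ p : Fin d × Fin d, F p.1 p.2 ^ 2 := by
      rw [haF]; exact (Fintype.sum_prod_type (fun p : Fin d × Fin d => F p.1 p.2 ^ 2)).symm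
    have h3 : b ^ 2 = ∑ p : Fin d × Fin d, G p.1 p.2 ^ 2 := by
      rw [hbG]; exact (Fintype.sum_prod_type (fun p : Fin d × Fin d => G p.1 p.2 ^ 2)).symm
    have hcs := Finset.sum_mul_sq_le_sq_mul_sq Finset.univ
      (fun p : Fin d × Fin d => F p.1 p.2) (fun p : Fin d × Fin d => G p.1 p.2)
    rw [← h2, ← h3] at hcs
    rw [h1]
    nlinarith [mul_nonneg ha0 hb0]
  have hνF : 0 ≤ ν F := by
    rw [hνdef F]
    exact add_nonneg hνinf (mul_nonneg (sub_nonneg.2 hν) (Real.rpow_nonneg (by positivity) _))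
  have hνG : 0 ≤ ν G := by
    rw [hνdef G]
    exact add_nonneg hνinf (mul_nonneg (sub_nonneg.2 hν) (Real.rpow_nonneg (by positivity) _))
  have hmono : 0 ≤ (a - b) * (ν F * a - ν G * b) := by
    rcases le_total a b with h | h
    · have := cy_nu_mono m C0 lam νinf ν0 hm hC0 hνinf hν ha0 h
      rw [← hνdef F, ← hνdef G] at this
      nlinarith
    · have := cy_nu_mono m C0 lam νinf ν0 hm hC0 hνinf hν hb0 h
      rw [← hνdef G, ← hνdef F] at this
      nlinarith
  have expand : (∑ i, ∑ j, (ν F * F i j - ν G * G i j) * (F i j - G i j))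
      = ν F * (∑ i, ∑ j, F i j ^ 2) + ν G * (∑ i, ∑ j, G i j ^ 2)
        - (ν F + ν G) * (∑ i, ∑ j, F i j * G i j) := by
    simp only [Finset.mul_sum, ← Finset.sum_add_distrib, ← Finset.sum_sub_distrib]
    exact Finset.sum_congr rfl fun i _ => Finset.sum_congr rfl fun j _ => by ring
  rw [expand, ← haF, ← hbG]
  nlinarith [mul_le_mul_of_nonneg_left hCS (add_nonneg hνF hνG)]
end
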